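/- arXiv:math/0607504 — 4 statements merged into one kernel-verified Lean document; each statement's English description precedes it below -/
import Mathlib

section
/- Let $U_1, U_2, \ldots$ be i.i.d. uniform on $[0,1]$ and $0<r<1$. Let $n(r) = \#\{n : U_n < r^{2n}\}$. Then for every positive integer $m$, $\mathbb{P}[n(r) \ge m] \le \binom{m^2}{m} r^{m(m+1)} + \frac{r^{2m^2+2}}{1-r^2}$. -/
open MeasureTheory ProbabilityTheory

/-!
If `m` indices `n ≥ 1` satisfy `U n < r ^ (2 * n)`, then either all of them lie in `[1, m²]`,
or one of them exceeds `m²`. By independence, a fixed `m`-set `s` of positive indices is hit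
with probability `r ^ (∑ n ∈ s, 2 * n) ≤ r ^ (m * (m + 1))`, and `[1, m²]` has `(m² choose m)`
such sets; some `n > m²` is hit with probability at most the geometric tail
`∑ n > m², r ^ (2 * n)`.
-/

open Finset in
theorem Finset.card_mul_card_add_one_le_sum_two_mul (s : Finset ℕ) (hs : ∀ n ∈ s, 1 ≤ n) :
    #s * (#s + 1) ≤ ∑ n ∈ s, 2 * n := by
  have key : ∑ i ∈ range #s, ((1 : ℤ) + i) ≤ ∑ n ∈ s, (n : ℤ) := by
    simpa using sum_range_le_sum (s := s.map Nat.castEmbedding) (c := 1) (by simpa using hs)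
  have gauss (k : ℕ) : ∑ i ∈ range k, 2 * ((1 : ℤ) + i) = k * (k + 1) := by
    induction k with
    | zero => simp
    | succ k ih => rw [sum_range_succ, ih]; push_cast; ring
  zify
  rw [← gauss, ← mul_sum, ← mul_sum]
  omega

theorem setOf_exists_finset_subset_union {Ω : Type*} (E : ℕ → Set Ω) (N m : ℕ) :
    {ω | ∃ s : Finset ℕ, s.card = m ∧ ∀ n ∈ s, 1 ≤ n ∧ ω ∈ E n} ⊆
      (⋃ s ∈ (Finset.Icc 1 N).powersetCard m, ⋂ n ∈ s, E n) ∪ ⋃ k, E (N + 1 + k) := by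
  rintro ω ⟨s, hcard, hs⟩
  by_cases hsub : s ⊆ Finset.Icc 1 N
  · refine Or.inl (Set.mem_iUnion₂.2 ⟨s, Finset.mem_powersetCard.2 ⟨hsub, hcard⟩, ?_⟩)
    exact Set.mem_iInter₂.2 fun n hn ↦ (hs n hn).2
  · obtain ⟨n, hn, hnN⟩ := Finset.not_subset.1 hsub
    obtain ⟨hn1, hnE⟩ := hs n hn
    have hNn : N + 1 + (n - (N + 1)) = n := by
      rw [Finset.mem_Icc] at hnN
      omega
    exact Or.inr (Set.mem_iUnion.2 ⟨n - (N + 1), by rwa [hNn]⟩)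

section Uniform

variable {Ω : Type*} [MeasurableSpace Ω] {P : Measure Ω} {U : ℕ → Ω → ℝ}

theorem measure_setOf_lt_le_ofReal {X : Ω → ℝ} (hX : Measurable X)
    (hlaw : P.map X = volume.restrict (Set.Icc 0 1)) (c : ℝ) :
    P {ω | X ω < c} ≤ ENNReal.ofReal c := by
  calc P {ω | X ω < c} = volume (Set.Iio c ∩ Set.Icc 0 1) := by
        rw [← Measure.restrict_apply measurableSet_Iio, ← hlaw,
          Measure.map_apply hX measurableSet_Iio]
        rfl
    _ ≤ volume (Set.Ico 0 c) := measure_mono fun x ⟨hxc, hx0, _⟩ ↦ ⟨hx0, hxc⟩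
    _ = ENNReal.ofReal c := by rw [Real.volume_Ico, sub_zero]

theorem measure_biInter_setOf_lt_le_prod (hU : ∀ n, Measurable (U n))
    (hlaw : ∀ n, P.map (U n) = volume.restrict (Set.Icc 0 1))
    (hindep : iIndepFun U P) (s : Finset ℕ) (c : ℕ → ℝ) :
    P (⋂ n ∈ s, {ω | U n ω < c n}) ≤ ∏ n ∈ s, ENNReal.ofReal (c n) := by
  change P (⋂ n ∈ s, U n ⁻¹' Set.Iio (c n)) ≤ _
  rw [hindep.meas_biInter fun n _ ↦ ⟨Set.Iio (c n), measurableSet_Iio, rfl⟩]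
  exact Finset.prod_le_prod' fun n _ ↦ measure_setOf_lt_le_ofReal (hU n) (hlaw n) (c n)

theorem measure_biInter_setOf_lt_pow_le (hU : ∀ n, Measurable (U n))
    (hlaw : ∀ n, P.map (U n) = volume.restrict (Set.Icc 0 1))
    (hindep : iIndepFun U P) {r : ℝ} (hr0 : 0 ≤ r) (hr1 : r ≤ 1)
    (s : Finset ℕ) (hs : ∀ n ∈ s, 1 ≤ n) :
    P (⋂ n ∈ s, {ω | U n ω < r ^ (2 * n)})
      ≤ ENNReal.ofReal (r ^ (s.card * (s.card + 1))) := by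
  calc P (⋂ n ∈ s, {ω | U n ω < r ^ (2 * n)})
      ≤ ∏ n ∈ s, ENNReal.ofReal (r ^ (2 * n)) :=
        measure_biInter_setOf_lt_le_prod hU hlaw hindep s _
    _ = ENNReal.ofReal (r ^ ∑ n ∈ s, 2 * n) := by
        rw [← ENNReal.ofReal_prod_of_nonneg fun n _ ↦ by positivity, Finset.prod_pow_eq_pow_sum]
    _ ≤ ENNReal.ofReal (r ^ (s.card * (s.card + 1))) :=
        ENNReal.ofReal_le_ofReal <| pow_le_pow_of_le_one hr0 hr1 <|
          s.card_mul_card_add_one_le_sum_two_mul hs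

theorem measure_biUnion_powersetCard_le (hU : ∀ n, Measurable (U n))
    (hlaw : ∀ n, P.map (U n) = volume.restrict (Set.Icc 0 1))
    (hindep : iIndepFun U P) {r : ℝ} (hr0 : 0 ≤ r) (hr1 : r ≤ 1) (N m : ℕ) :
    P (⋃ s ∈ (Finset.Icc 1 N).powersetCard m, ⋂ n ∈ s, {ω | U n ω < r ^ (2 * n)})
      ≤ ENNReal.ofReal (N.choose m * r ^ (m * (m + 1))) := by
  calc _ ≤ ∑ s ∈ (Finset.Icc 1 N).powersetCard m,
          P (⋂ n ∈ s, {ω | U n ω < r ^ (2 * n)}) :=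
        measure_biUnion_finset_le _ _
    _ ≤ ((Finset.Icc 1 N).powersetCard m).card • ENNReal.ofReal (r ^ (m * (m + 1))) := by
        refine Finset.sum_le_card_nsmul _ _ _ fun s hs ↦ ?_
        obtain ⟨hsub, rfl⟩ := Finset.mem_powersetCard.1 hs
        exact measure_biInter_setOf_lt_pow_le hU hlaw hindep hr0 hr1 s
          fun n hn ↦ (Finset.mem_Icc.1 (hsub hn)).1
    _ = ENNReal.ofReal (N.choose m * r ^ (m * (m + 1))) := by
        rw [Finset.card_powersetCard, Nat.card_Icc, Nat.add_sub_cancel, nsmul_eq_mul,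
          ENNReal.ofReal_mul (by positivity), ENNReal.ofReal_natCast]

theorem measure_iUnion_setOf_lt_pow_le (hU : ∀ n, Measurable (U n))
    (hlaw : ∀ n, P.map (U n) = volume.restrict (Set.Icc 0 1))
    {r : ℝ} (hr : r ^ 2 < 1) (N : ℕ) :
    P (⋃ k, {ω | U (N + k) ω < r ^ (2 * (N + k))})
      ≤ ENNReal.ofReal (r ^ (2 * N) / (1 - r ^ 2)) := by
  have hgeom : HasSum (fun k : ℕ ↦ r ^ (2 * N) * (r ^ 2) ^ k) (r ^ (2 * N) / (1 - r ^ 2)) := by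
    simpa [div_eq_mul_inv] using (hasSum_geometric_of_lt_one (by positivity) hr).mul_left _
  calc _ ≤ ∑' k, P {ω | U (N + k) ω < r ^ (2 * (N + k))} := measure_iUnion_le _
    _ ≤ ∑' k : ℕ, ENNReal.ofReal (r ^ (2 * N) * (r ^ 2) ^ k) := by
        refine ENNReal.tsum_le_tsum fun k ↦ ?_
        rw [← pow_mul, ← pow_add, ← mul_add]
        exact measure_setOf_lt_le_ofReal (hU _) (hlaw _) _
    _ = ENNReal.ofReal (r ^ (2 * N) / (1 - r ^ 2)) := by
        have hnonneg (k : ℕ) : 0 ≤ r ^ (2 * N) * (r ^ 2) ^ k :=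
          mul_nonneg ((even_two_mul N).pow_nonneg r) (by positivity)
        rw [← ENNReal.ofReal_tsum_of_nonneg hnonneg hgeom.summable, hgeom.tsum_eq]

end Uniform

theorem stmt10_general {Ω : Type*} [MeasurableSpace Ω] (P : Measure Ω)
    (U : ℕ → Ω → ℝ) (hU : ∀ n, Measurable (U n))
    (hlaw : ∀ n, Measure.map (U n) P = MeasureTheory.volume.restrict (Set.Icc (0 : ℝ) 1))
    (hindep : iIndepFun U P)
    (r : ℝ) (hr0 : 0 < r) (hr1 : r < 1) (m : ℕ) :
    P {ω | ∃ s : Finset ℕ, s.card = m ∧ ∀ n ∈ s, 1 ≤ n ∧ U n ω < r ^ (2 * n)}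
      ≤ ENNReal.ofReal ((Nat.choose (m ^ 2) m : ℝ) * r ^ (m * (m + 1))
          + r ^ (2 * m ^ 2 + 2) / (1 - r ^ 2)) := by
  have hr2 : r ^ 2 < 1 := pow_lt_one₀ hr0.le hr1 two_ne_zero
  have htail := measure_iUnion_setOf_lt_pow_le hU hlaw hr2 (m ^ 2 + 1)
  rw [mul_add, mul_one] at htail
  calc _ ≤ P ((⋃ s ∈ (Finset.Icc 1 (m ^ 2)).powersetCard m,
            ⋂ n ∈ s, {ω | U n ω < r ^ (2 * n)})
          ∪ ⋃ k, {ω | U (m ^ 2 + 1 + k) ω < r ^ (2 * (m ^ 2 + 1 + k))}) :=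
        measure_mono <|
          setOf_exists_finset_subset_union (fun n ↦ {ω | U n ω < r ^ (2 * n)}) _ _
    _ ≤ _ := measure_union_le _ _
    _ ≤ _ := add_le_add (measure_biUnion_powersetCard_le hU hlaw hindep hr0.le hr1.le _ _) htail
    _ = _ := (ENNReal.ofReal_add (by positivity) (div_nonneg (by positivity) (by linarith))).symm

theorem stmt10 {Ω : Type*} [MeasurableSpace Ω] (P : Measure Ω) [IsProbabilityMeasure P]
    (U : ℕ → Ω → ℝ) (hU : ∀ n, Measurable (U n))
    (hlaw : ∀ n, Measure.map (U n) P = MeasureTheory.volume.restrict (Set.Icc (0 : ℝ) 1))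
    (hindep : iIndepFun U P)
    (r : ℝ) (hr0 : 0 < r) (hr1 : r < 1) (m : ℕ) (hm : 1 ≤ m) :
    P {ω | ∃ s : Finset ℕ, s.card = m ∧ ∀ n ∈ s, 1 ≤ n ∧ U n ω < r ^ (2 * n)}
      ≤ ENNReal.ofReal ((Nat.choose (m ^ 2) m : ℝ) * r ^ (m * (m + 1))
          + r ^ (2 * m ^ 2 + 2) / (1 - r ^ 2)) :=
  stmt10_general P U hU hlaw hindep r hr0 hr1 m
end

section
/- Define the density $q(z_1, \ldots, z_n) = |\Delta(z_1,\ldots,z_n)|^2 \prod_{k=1}^n (1+|z_k|^2)^{-(n+1)}$ on $\mathbb{C}^n$, where $\Delta(z_1,\ldots,z_n) = \prod_{i<j}(z_j - z_i)$. Then for every Möbius transformation $\phi(z) = \frac{\alpha z+\beta}{-\bar\beta z+\bar\alpha}$ with $|\alpha|^2+|\beta|^2=1$, one has $q(\phi(z_1),\ldots,\phi(z_n)) \prod_{k=1}^n |\phi'(z_k)|^2 = q(z_1,\ldots,z_n)$ for all $z_1,\ldots,z_n$ in the domain of $\phi$. -/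
/-! A Möbius map `φ` with `α ᾱ + β β̄ = 1` multiplies differences by `c(z) c(w)` and the weight
`1 + |z|²` by `|c(z)|²`, where `c(z) = 1 / (-β̄ z + ᾱ)`, so that `φ' = c²`. In `q(φ(z)) ∏ |φ'(z_k)|²`
each coordinate then picks up `|c_k|^{2(n-1)}` from the Vandermonde factor, `|c_k|⁴` from the
Jacobian and `|c_k|^{-2(n+1)}` from the weight, and the exponents cancel. -/

open Complex

/-- The Vandermonde product `∏_{i<j} (z_j - z_i)`. -/
noncomputable def vandermondeProd {n : ℕ} (z : Fin n → ℂ) : ℂ :=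
  ∏ i : Fin n, ∏ j ∈ Finset.Ioi i, (z j - z i)

/-- The density `q(z) = |Δ(z)|² ∏_k (1+|z_k|²)^{-(n+1)}`. -/
noncomputable def qdens {n : ℕ} (z : Fin n → ℂ) : ℝ :=
  ‖vandermondeProd z‖ ^ 2
    * ∏ k : Fin n, ((1 + ‖z k‖ ^ 2) ^ (n + 1))⁻¹

theorem Fin.prod_prod_Ioi_mul {M : Type*} [CommMonoid M] {n : ℕ} (f : Fin n → M) :
    ∏ i : Fin n, ∏ j ∈ Finset.Ioi i, f i * f j = ∏ k : Fin n, f k ^ (n - 1) := by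
  have hleft : ∏ i : Fin n, ∏ j ∈ Finset.Ioi i, f i = ∏ i : Fin n, f i ^ (n - 1 - i) := by
    simp [Finset.prod_const, Fin.card_Ioi]
  have hright : ∏ i : Fin n, ∏ j ∈ Finset.Ioi i, f j = ∏ j : Fin n, f j ^ (j : ℕ) := by
    rw [Finset.prod_comm' (t' := Finset.univ) (s' := fun j => Finset.Iio j)
      (fun i j => by simp [Finset.mem_Ioi, Finset.mem_Iio])]
    simp [Finset.prod_const, Fin.card_Iio]
  simp only [Finset.prod_mul_distrib]
  rw [hleft, hright, ← Finset.prod_mul_distrib]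
  refine Finset.prod_congr rfl fun k _ => ?_
  rw [← pow_add]
  congr 1
  have := k.isLt
  omega

theorem mobius_sub_mobius {K : Type*} [Field K] {a b c d z w : K} (hdet : a * d - b * c = 1)
    (hz : c * z + d ≠ 0) (hw : c * w + d ≠ 0) :
    (a * z + b) / (c * z + d) - (a * w + b) / (c * w + d)
      = (z - w) * ((c * z + d)⁻¹ * (c * w + d)⁻¹) := by
  have hnum : (a * z + b) * (c * w + d) - (c * z + d) * (a * w + b) = z - w := by
    linear_combination (z - w) * hdet
  rw [div_sub_div _ _ hz hw, hnum, div_eq_mul_inv, mul_inv]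

theorem norm_sq_add_norm_sq_mobius (α β z : ℂ) :
    ‖α * z + β‖ ^ 2 + ‖-(starRingEnd ℂ β) * z + starRingEnd ℂ α‖ ^ 2
      = (‖α‖ ^ 2 + ‖β‖ ^ 2) * (1 + ‖z‖ ^ 2) := by
  apply ofReal_injective
  push_cast
  simp only [← mul_conj', map_add, map_mul, map_neg, conj_conj]
  ring

theorem one_add_norm_sq_mobius {α β z : ℂ} (h : ‖α‖ ^ 2 + ‖β‖ ^ 2 = 1)
    (hz : -(starRingEnd ℂ β) * z + starRingEnd ℂ α ≠ 0) :
    1 + ‖(α * z + β) / (-(starRingEnd ℂ β) * z + starRingEnd ℂ α)‖ ^ 2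
      = (1 + ‖z‖ ^ 2) * ‖(-(starRingEnd ℂ β) * z + starRingEnd ℂ α)⁻¹‖ ^ 2 := by
  have hnorm := norm_sq_add_norm_sq_mobius α β z
  rw [h, one_mul] at hnorm
  have hd : ‖-(starRingEnd ℂ β) * z + starRingEnd ℂ α‖ ≠ 0 := norm_ne_zero_iff.mpr hz
  rw [norm_div, norm_inv, div_pow, inv_pow, ← hnorm, add_mul,
    mul_inv_cancel₀ (pow_ne_zero 2 hd), div_eq_mul_inv, add_comm]

theorem vandermondeProd_eq_mul_prod_pow {n : ℕ} {z w c : Fin n → ℂ}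
    (hsub : ∀ i j, w i - w j = (z i - z j) * (c i * c j)) :
    vandermondeProd w = vandermondeProd z * ∏ k : Fin n, c k ^ (n - 1) := by
  rw [vandermondeProd, vandermondeProd, ← Fin.prod_prod_Ioi_mul, ← Finset.prod_mul_distrib]
  refine Finset.prod_congr rfl fun i _ => ?_
  rw [← Finset.prod_mul_distrib]
  refine Finset.prod_congr rfl fun j _ => ?_
  rw [hsub, mul_comm (c j)]

theorem qdens_mul_prod_norm_sq_eq {n : ℕ} {z w c : Fin n → ℂ} (hc : ∀ k, c k ≠ 0)
    (hsub : ∀ i j, w i - w j = (z i - z j) * (c i * c j))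
    (hone : ∀ k, 1 + ‖w k‖ ^ 2 = (1 + ‖z k‖ ^ 2) * ‖c k‖ ^ 2) :
    qdens w * ∏ k : Fin n, ‖c k ^ 2‖ ^ 2 = qdens z := by
  simp only [qdens, vandermondeProd_eq_mul_prod_pow hsub, hone, norm_mul, norm_prod, norm_pow,
    mul_pow, ← Finset.prod_pow, mul_assoc, ← Finset.prod_mul_distrib]
  congr 1
  refine Finset.prod_congr rfl fun k _ => ?_
  have hexp : (‖c k‖ ^ (n - 1)) ^ 2 * (‖c k‖ ^ 2) ^ 2 = (‖c k‖ ^ 2) ^ (n + 1) := by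
    rw [← pow_mul, ← pow_mul, ← pow_mul, ← pow_add]
    congr 1
    have := k.isLt
    omega
  have hck : ‖c k‖ ≠ 0 := norm_ne_zero_iff.mpr (hc k)
  rw [mul_inv, ← hexp]
  field_simp

theorem stmt13 (n : ℕ) (α β : ℂ) (h : ‖α‖ ^ 2 + ‖β‖ ^ 2 = 1)
    (z : Fin n → ℂ) (hz : ∀ k, -(starRingEnd ℂ β) * z k + starRingEnd ℂ α ≠ 0) :
    qdens (fun k => (α * z k + β) / (-(starRingEnd ℂ β) * z k + starRingEnd ℂ α))
        * ∏ k : Fin n,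
            ‖((-(starRingEnd ℂ β) * z k + starRingEnd ℂ α) ^ 2)⁻¹‖ ^ 2
      = qdens z := by
  have hdet : α * starRingEnd ℂ α - β * -starRingEnd ℂ β = 1 := by
    rw [mul_neg, sub_neg_eq_add, mul_conj', mul_conj']
    exact_mod_cast h
  simp only [← inv_pow]
  exact qdens_mul_prod_norm_sq_eq (fun k => inv_ne_zero (hz k))
    (fun i j => mobius_sub_mobius hdet (hz i) (hz j)) (fun k => one_add_norm_sq_mobius h (hz k))
end

section
/- Let $p: \mathbb{C}^n \to [0,\infty)$ be a function of the form $p(z_1,\ldots,z_n) = |\Delta(z_1,\ldots,z_n)|^2 V(|z_1|^2,\ldots,|z_n|^2)$ (with $\Delta$ the Vandermonde and $V$ continuous and positive), satisfying $p(\phi(z_1),\ldots,\phi(z_n))\prod_k |\phi'(z_k)|^2 = p(z_1,\ldots,z_n)$ for all sphere rotations $\phi(z)=\frac{\alpha z+\beta}{-\bar\beta z+\bar\alpha}$ ($|\alpha|^2+|\beta|^2=1$). Then $V(|z_1|^2,\ldots,|z_n|^2) = c\prod_{k=1}^n (1+|z_k|^2)^{-(n+1)}$ for some constant $c > 0$.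 -/
open Complex

/-!
Under a Möbius map of determinant one, `φ z_j - φ z_i = (z_j - z_i) / ((c z_i + d) (c z_j + d))`,
so the Vandermonde factor picks up `∏ (c z_k + d)^{-(n-1)}`; when the `z_k` are distinct it can be
cancelled, and invariance becomes `V(|φ z|²) = V(|z|²) ∏ |c z_k + d|^{2(n+1)}`.
The rotation `α = β = 1/√2`, i.e. `φ z = (z + 1) / (1 - z)`, maps the imaginary axis onto the
unit circle, and there `|c (i y) + d|² = (1 + y²) / 2`, so `z_k = i y_k` gives `V(y²) = 2^{n(n+1)} V(1) ∏ (1 + y_k²)^{-(n+1)}`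
for distinct `y_k`. Both sides are continuous in `y` and such `y` are dense.
-/

theorem Fin.prod_prod_Ioi_mul_eq_prod_pow {M : Type*} [CommMonoid M] {n : ℕ} (d : Fin n → M) :
    ∏ i : Fin n, ∏ j ∈ Finset.Ioi i, (d i * d j) = ∏ k : Fin n, d k ^ (n - 1) := by
  have hswap : ∏ i : Fin n, ∏ j ∈ Finset.Ioi i, d j = ∏ j : Fin n, ∏ _i ∈ Finset.Iio j, d j := by
    rw [Finset.prod_sigma', Finset.prod_sigma']
    exact Finset.prod_nbij' (fun p => ⟨p.2, p.1⟩) (fun p => ⟨p.2, p.1⟩) (by simp) (by simp)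
      (by simp) (by simp) (by simp)
  simp_rw [Finset.prod_mul_distrib, hswap, Finset.prod_const, ← Finset.prod_mul_distrib, ← pow_add,
    Fin.card_Ioi, Fin.card_Iio]
  exact Finset.prod_congr rfl fun k _ => congrArg _ (by omega)

theorem vandermondeProd_ne_zero {n : ℕ} {z : Fin n → ℂ} (hz : Function.Injective z) :
    vandermondeProd z ≠ 0 :=
  Finset.prod_ne_zero_iff.2 fun _ _ => Finset.prod_ne_zero_iff.2 fun _ hj =>
    sub_ne_zero.2 fun h => (Finset.mem_Ioi.1 hj).ne' (hz h)

theorem vandermondeProd_moebius {n : ℕ} {a b c d : ℂ} (hdet : a * d - b * c = 1) (z : Fin n → ℂ)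
    (hz : ∀ k, c * z k + d ≠ 0) :
    vandermondeProd (fun k => (a * z k + b) / (c * z k + d)) * ∏ k, (c * z k + d) ^ (n - 1)
      = vandermondeProd z := by
  have hdiff : ∀ i j, (a * z j + b) / (c * z j + d) - (a * z i + b) / (c * z i + d)
      = (z j - z i) / ((c * z i + d) * (c * z j + d)) := fun i j => by
    rw [div_sub_div _ _ (hz j) (hz i), div_eq_div_iff (mul_ne_zero (hz j) (hz i))
      (mul_ne_zero (hz i) (hz j))]
    linear_combination (z j - z i) * (c * z i + d) * (c * z j + d) * hdet
  rw [vandermondeProd, vandermondeProd, ← Fin.prod_prod_Ioi_mul_eq_prod_pow,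
    ← Finset.prod_mul_distrib]
  refine Finset.prod_congr rfl fun i _ => ?_
  rw [← Finset.prod_mul_distrib]
  refine Finset.prod_congr rfl fun j _ => ?_
  rw [hdiff, div_mul_cancel₀ _ (mul_ne_zero (hz i) (hz j))]

theorem dense_setOf_injective (n : ℕ) : Dense {y : Fin n → ℝ | Function.Injective y} := by
  intro y
  let bad : Set ℝ := ⋃ i, ⋃ j, ⋃ (_ : i ≠ j), {θ | y i + θ * i = y j + θ * j}
  have hbad : bad.Countable := by
    refine Set.countable_iUnion fun i => Set.countable_iUnion fun j =>
      Set.countable_iUnion fun hij => Set.Subsingleton.countable ?_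
    intro θ hθ θ' hθ'
    have hij' : ((i : ℕ) : ℝ) - j ≠ 0 := sub_ne_zero.2 (by exact_mod_cast Fin.val_ne_of_ne hij)
    exact mul_right_cancel₀ hij' (by simp only [Set.mem_ofPred_eq] at hθ hθ'; linarith)
  have hperturb : Continuous fun θ : ℝ => y + θ • fun k : Fin n => ((k : ℕ) : ℝ) := by fun_prop
  have hgood : Set.MapsTo (fun θ : ℝ => y + θ • fun k : Fin n => ((k : ℕ) : ℝ)) badᶜ
      {y | Function.Injective y} := fun θ hθ i j hij => by
    by_contra hne
    exact hθ (Set.mem_iUnion₂.2 ⟨i, j, Set.mem_iUnion.2 ⟨hne, by simpa using hij⟩⟩)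
  simpa using map_mem_closure hperturb (hbad.dense_compl ℝ 0) hgood

-- `p (φ z) ∏ |φ' z_k|² = p z` for `p z = |Δ z|² V (|z_1|², …, |z_n|²)` and every rotation `φ`.
def IsRotationInvariant {n : ℕ} (V : (Fin n → ℝ) → ℝ) : Prop :=
  ∀ α β : ℂ, ‖α‖ ^ 2 + ‖β‖ ^ 2 = 1 →
    ∀ z : Fin n → ℂ, (∀ k, -(starRingEnd ℂ β) * z k + starRingEnd ℂ α ≠ 0) →
      ‖vandermondeProd
            (fun k => (α * z k + β) / (-(starRingEnd ℂ β) * z k + starRingEnd ℂ α))‖ ^ 2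
          * V (fun k => ‖(α * z k + β) / (-(starRingEnd ℂ β) * z k + starRingEnd ℂ α)‖ ^ 2)
          * ∏ k, ‖((-(starRingEnd ℂ β) * z k + starRingEnd ℂ α) ^ 2)⁻¹‖ ^ 2
        = ‖vandermondeProd z‖ ^ 2 * V (fun k => ‖z k‖ ^ 2)

theorem IsRotationInvariant.apply_moebius {n : ℕ} {V : (Fin n → ℝ) → ℝ}
    (hV : IsRotationInvariant V) {α β : ℂ} (hαβ : ‖α‖ ^ 2 + ‖β‖ ^ 2 = 1) {z : Fin n → ℂ}
    (hz : Function.Injective z) (hd : ∀ k, -(starRingEnd ℂ β) * z k + starRingEnd ℂ α ≠ 0) :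
    V (fun k => ‖(α * z k + β) / (-(starRingEnd ℂ β) * z k + starRingEnd ℂ α)‖ ^ 2)
      = V (fun k => ‖z k‖ ^ 2)
        * ∏ k, ‖-(starRingEnd ℂ β) * z k + starRingEnd ℂ α‖ ^ (2 * (n + 1)) := by
  set d := fun k => -(starRingEnd ℂ β) * z k + starRingEnd ℂ α
  have hdet : α * starRingEnd ℂ α + β * starRingEnd ℂ β = 1 := by
    rw [mul_conj, mul_conj, normSq_eq_norm_sq, normSq_eq_norm_sq]
    exact_mod_cast hαβ
  have hvand : ‖vandermondeProd (fun k => (α * z k + β) / d k)‖ * ∏ k, ‖d k‖ ^ (n - 1)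
      = ‖vandermondeProd z‖ := by
    rw [← vandermondeProd_moebius (a := α) (b := β) (by linear_combination hdet) z hd]
    simp only [norm_mul, norm_prod, norm_pow, d]
  have hφ : ‖vandermondeProd (fun k => (α * z k + β) / d k)‖ ≠ 0 := fun h => by
    rw [h, zero_mul, eq_comm, norm_eq_zero] at hvand
    exact vandermondeProd_ne_zero hz hvand
  have hexp : ∏ k, ‖d k‖ ^ (2 * (n + 1)) = (∏ k, ‖d k‖ ^ (n - 1)) ^ 2 * ∏ k, ‖d k‖ ^ 4 := by
    rw [← Finset.prod_pow, ← Finset.prod_mul_distrib]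
    refine Finset.prod_congr rfl fun k _ => ?_
    rw [← pow_mul, ← pow_add]
    have := k.pos
    congr 1
    omega
  have hinv : ‖vandermondeProd (fun k => (α * z k + β) / d k)‖ ^ 2
      * V (fun k => ‖(α * z k + β) / d k‖ ^ 2) * ∏ k, ‖(d k ^ 2)⁻¹‖ ^ 2
      = ‖vandermondeProd z‖ ^ 2 * V (fun k => ‖z k‖ ^ 2) := hV α β hαβ z hd
  have hP4 : ∏ k, ‖(d k ^ 2)⁻¹‖ ^ 2 = (∏ k, ‖d k‖ ^ 4)⁻¹ := by
    simp only [norm_inv, norm_pow, ← Finset.prod_inv_distrib, inv_pow, ← pow_mul]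
  have hP4_ne : ∏ k, ‖d k‖ ^ 4 ≠ 0 :=
    Finset.prod_ne_zero_iff.2 fun k _ => pow_ne_zero _ (norm_ne_zero_iff.2 (hd k))
  rw [hP4, mul_inv_eq_iff_eq_mul₀ hP4_ne, ← hvand] at hinv
  rw [hexp]
  apply mul_left_cancel₀ (pow_ne_zero 2 hφ)
  linear_combination hinv

theorem IsRotationInvariant.apply_sq_mul_prod {n : ℕ} {V : (Fin n → ℝ) → ℝ}
    (hV : IsRotationInvariant V) {y : Fin n → ℝ} (hy : Function.Injective y) :
    V (fun k => y k ^ 2) * ∏ k, ((1 + y k ^ 2) / 2) ^ (n + 1) = V 1 := by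
  set u : ℝ := (Real.sqrt 2)⁻¹
  have hu : u ^ 2 = 1 / 2 := by rw [inv_pow, Real.sq_sqrt zero_le_two, one_div]
  have hαβ : ‖(u : ℂ)‖ ^ 2 + ‖(u : ℂ)‖ ^ 2 = 1 := by
    rw [norm_real, Real.norm_eq_abs, sq_abs, hu]; norm_num
  set d : Fin n → ℂ := fun k => -(u : ℂ) * (y k * I) + u
  have hd_sq : ∀ k, ‖d k‖ ^ 2 = (1 + y k ^ 2) / 2 := fun k => by
    rw [Complex.sq_norm, normSq_apply]
    simp only [d, neg_mul, add_re, neg_re, mul_re, ofReal_re, I_re, mul_zero, ofReal_im, I_im,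
      mul_one, sub_self, mul_im, add_zero, zero_mul, neg_zero, zero_add, add_im, neg_im, mul_neg,
      neg_neg]
    linear_combination (1 + y k ^ 2) * hu
  have hd : ∀ k, d k ≠ 0 := fun k h => by
    have := hd_sq k
    rw [h, norm_zero] at this
    nlinarith [sq_nonneg (y k)]
  have hφ : ∀ k, ‖((u : ℂ) * (y k * I) + u) / d k‖ ^ 2 = 1 := fun k => by
    have hconj : (u : ℂ) * (y k * I) + u = starRingEnd ℂ (d k) := by
      simp [d, conj_ofReal]
    rw [hconj, norm_div, norm_conj, div_self (norm_ne_zero_iff.2 (hd k)), one_pow]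
  have hz : Function.Injective fun k => (y k : ℂ) * I := fun i j h => hy (by simpa using h)
  have h := hV.apply_moebius hαβ hz (by simpa only [conj_ofReal] using hd)
  simp only [conj_ofReal] at h
  change V (fun k => ‖((u : ℂ) * (y k * I) + u) / d k‖ ^ 2)
    = V (fun k => ‖(y k : ℂ) * I‖ ^ 2) * ∏ k, ‖d k‖ ^ (2 * (n + 1)) at h
  simp only [hφ, pow_mul, hd_sq, norm_mul, norm_I, norm_real, Real.norm_eq_abs, mul_one,
    sq_abs] at h
  exact h.symm

theorem stmt14 (n : ℕ) (V : (Fin n → ℝ) → ℝ) (hVc : Continuous V)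
    (hVpos : ∀ x, 0 < V x)
    (hinv : ∀ α β : ℂ, ‖α‖ ^ 2 + ‖β‖ ^ 2 = 1 →
      ∀ z : Fin n → ℂ, (∀ k, -(starRingEnd ℂ β) * z k + starRingEnd ℂ α ≠ 0) →
        (‖vandermondeProd
              (fun k => (α * z k + β) / (-(starRingEnd ℂ β) * z k + starRingEnd ℂ α))‖ ^ 2
            * V (fun k => ‖
                ((α * z k + β) / (-(starRingEnd ℂ β) * z k + starRingEnd ℂ α))‖ ^ 2))
          * ∏ k : Fin n,
              ‖((-(starRingEnd ℂ β) * z k + starRingEnd ℂ α) ^ 2)⁻¹‖ ^ 2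
        = ‖vandermondeProd z‖ ^ 2 * V (fun k => ‖z k‖ ^ 2)) :
    ∃ c : ℝ, 0 < c ∧ ∀ z : Fin n → ℂ,
      V (fun k => ‖z k‖ ^ 2)
        = c * ∏ k : Fin n, ((1 + ‖z k‖ ^ 2) ^ (n + 1))⁻¹ := by
  have hinjective : ∀ y : Fin n → ℝ, Function.Injective y →
      V (fun k => y k ^ 2) = V 1 * (2 ^ (n + 1)) ^ n * ∏ k, ((1 + y k ^ 2) ^ (n + 1))⁻¹ :=
      fun y hy => by
    have hprod : ∏ k, ((1 + y k ^ 2) / 2) ^ (n + 1)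
        = (∏ k, (1 + y k ^ 2) ^ (n + 1)) / (2 ^ (n + 1)) ^ n := by
      simp [div_pow, Finset.prod_div_distrib]
    rw [Finset.prod_inv_distrib, ← IsRotationInvariant.apply_sq_mul_prod hinv hy, hprod]
    field_simp
  have hall : (fun y : Fin n → ℝ => V (fun k => y k ^ 2))
      = fun y => V 1 * (2 ^ (n + 1)) ^ n * ∏ k, ((1 + y k ^ 2) ^ (n + 1))⁻¹ :=
    Continuous.ext_on (dense_setOf_injective n) (by fun_prop)
      (by fun_prop (disch := intros; positivity)) hinjective
  exact ⟨_, mul_pos (hVpos 1) (by positivity), fun z => congrFun hall fun k => ‖z k‖⟩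
end

section
/- Let $(a_n)_{n\ge 0}$ be i.i.d. standard complex Gaussians and fix $r > 0$. For all sufficiently large $m$, the probability that $|a_n| \le \frac{r^{m-n}\sqrt{n!}}{\sqrt{m!}}$ simultaneously for all $0 \le n \le m-1$ is at least $\prod_{n=0}^{m-1} \frac{r^{2(m-n)} n!}{2\, m!}$, which equals $e^{-\frac{1}{2}m^2\log m + O(m^2)}$. -/
/-!
By independence the probability factors as `∏ μ (closedBall 0 tₙ)`, and on the disc of radius `t`
the Gaussian density is at least `e^{-t²}/π`, so each factor is at least `t² e^{-t²} ≥ t²/2` once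
`t² ≤ log 2`. The radii satisfy `tₙ² = r^{2(m-n)} n!/m! ≤ r² e^{r²}/m` because
`n! (m-1-n)! ≤ (m-1)!`, so they are all small for `m` large.

For the asymptotics, `log ∏ = m(m+1) log r - m log 2 - ∑_{k ≤ m} k log k`, and comparing `k log k`
with `k log m` through `log (m/k) ≤ m/k - 1` gives `∑_{k ≤ m} k log k = ½ m² log m + O(m²)`.
-/

open MeasureTheory ProbabilityTheory

noncomputable def stdComplexGaussian : MeasureTheory.Measure ℂ :=
  MeasureTheory.volume.withDensity
    (fun z => ENNReal.ofReal ((1 / Real.pi) * Real.exp (-(‖z‖ ^ 2))))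

open Finset Real
open scoped Nat

lemma sq_mul_exp_neg_sq_le_stdComplexGaussian_closedBall {t : ℝ} (ht : 0 ≤ t) :
    ENNReal.ofReal (t ^ 2 * exp (-t ^ 2)) ≤ stdComplexGaussian (Metric.closedBall 0 t) := by
  have hdensity : ∀ z ∈ Metric.closedBall (0 : ℂ) t,
      ENNReal.ofReal (1 / π * exp (-t ^ 2)) ≤ ENNReal.ofReal (1 / π * exp (-‖z‖ ^ 2)) := by
    intro z hz
    have hz : ‖z‖ ≤ t := by simpa using hz
    gcongr
  calc ENNReal.ofReal (t ^ 2 * exp (-t ^ 2))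
      = ENNReal.ofReal (1 / π * exp (-t ^ 2)) * volume (Metric.closedBall (0 : ℂ) t) := by
        rw [Complex.volume_closedBall, ← ENNReal.ofReal_pow ht, ← ENNReal.ofReal_coe_nnreal,
          NNReal.coe_real_pi, ← ENNReal.ofReal_mul (by positivity),
          ← ENNReal.ofReal_mul (by positivity)]
        congr 1
        field_simp
    _ = ∫⁻ _ in Metric.closedBall (0 : ℂ) t, ENNReal.ofReal (1 / π * exp (-t ^ 2)) :=
        (setLIntegral_const _ _).symm
    _ ≤ ∫⁻ z in Metric.closedBall (0 : ℂ) t, ENNReal.ofReal (1 / π * exp (-‖z‖ ^ 2)) :=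
        setLIntegral_mono' measurableSet_closedBall hdensity
    _ = stdComplexGaussian (Metric.closedBall 0 t) :=
        (withDensity_apply _ measurableSet_closedBall).symm

lemma half_sq_le_stdComplexGaussian_closedBall {t : ℝ} (ht : 0 ≤ t) (ht2 : t ^ 2 ≤ log 2) :
    ENNReal.ofReal (t ^ 2 / 2) ≤ stdComplexGaussian (Metric.closedBall 0 t) := by
  refine le_trans (ENNReal.ofReal_le_ofReal ?_)
    (sq_mul_exp_neg_sq_le_stdComplexGaussian_closedBall ht)
  have hexp : 1 / 2 ≤ exp (-t ^ 2) := by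
    calc (1 : ℝ) / 2 = exp (-log 2) := by rw [exp_neg, exp_log two_pos, one_div]
      _ ≤ exp (-t ^ 2) := exp_le_exp.2 (neg_le_neg ht2)
  nlinarith [sq_nonneg t]

lemma ofReal_prod_le_measure_forall_norm_le {Ω ι : Type*} [MeasurableSpace Ω] {P : Measure Ω}
    {a : ι → Ω → ℂ} (ha : ∀ i, Measurable (a i))
    (hlaw : ∀ i, P.map (a i) = stdComplexGaussian) (hindep : iIndepFun a P)
    (s : Finset ι) {t : ι → ℝ} (ht0 : ∀ i ∈ s, 0 ≤ t i) (ht : ∀ i ∈ s, t i ^ 2 ≤ log 2) :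
    ENNReal.ofReal (∏ i ∈ s, t i ^ 2 / 2) ≤ P {ω | ∀ i ∈ s, ‖a i ω‖ ≤ t i} := by
  have hset : {ω | ∀ i ∈ s, ‖a i ω‖ ≤ t i} = ⋂ i ∈ s, a i ⁻¹' Metric.closedBall 0 (t i) := by
    ext ω
    simp
  rw [hset, hindep.meas_biInter fun i _ => ⟨_, measurableSet_closedBall, rfl⟩,
    ENNReal.ofReal_prod_of_nonneg fun i _ => by positivity]
  refine prod_le_prod' fun i hi => ?_
  rw [← Measure.map_apply (ha i) measurableSet_closedBall, hlaw i]
  exact half_sq_le_stdComplexGaussian_closedBall (ht0 i hi) (ht i hi)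

lemma pow_mul_factorial_div_factorial_le {c : ℝ} (hc : 0 ≤ c) {n m : ℕ} (hnm : n < m) :
    c ^ (m - n) * n ! / m ! ≤ c * exp c / m := by
  obtain ⟨j, rfl⟩ : ∃ j, m = n + j + 1 := ⟨m - n - 1, by omega⟩
  have hfac : (n ! * j ! : ℝ) ≤ (n + j)! := by
    exact_mod_cast Nat.le_of_dvd (Nat.factorial_pos _)
      (Nat.factorial_mul_factorial_dvd_factorial_add n j)
  have hratio : c ^ j * n ! / (n + j)! ≤ exp c := by
    calc c ^ j * n ! / (n + j)! ≤ c ^ j / j ! := by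
          rw [div_le_div_iff₀ (by positivity) (by positivity), mul_assoc]
          gcongr
      _ ≤ exp c := pow_div_factorial_le_exp c hc j
  rw [show n + j + 1 - n = j + 1 by omega, Nat.factorial_succ, pow_succ]
  calc c ^ j * c * n ! / ((n + j + 1) * (n + j)! : ℕ)
      = c / (n + j + 1 : ℕ) * (c ^ j * n ! / (n + j)!) := by
        push_cast
        field_simp
    _ ≤ c / (n + j + 1 : ℕ) * exp c := by gcongr
    _ = c * exp c / (n + j + 1 : ℕ) := by ring

lemma sum_range_log_factorial_sub (m : ℕ) :
    ∑ n ∈ range m, (log m ! - log n !) = ∑ k ∈ range (m + 1), k * log k := by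
  induction m with
  | zero => simp
  | succ m ih =>
    have hlog : log (m + 1)! = log (m + 1 : ℕ) + log m ! := by
      rw [Nat.factorial_succ, Nat.cast_mul, log_mul (by positivity) (by positivity)]
    simp only [sum_range_succ _ m, sum_range_succ _ (m + 1), hlog, add_sub_assoc,
      sum_add_distrib, sum_const, card_range, nsmul_eq_mul, ih]
    push_cast
    ring

lemma mul_log_sub_le_mul_log {x y : ℝ} (hx : 0 ≤ x) (hxy : x ≤ y) :
    x * log y - (y - x) ≤ x * log x := by
  rcases hx.eq_or_lt with rfl | hx
  · simpa using hxy
  have h := log_le_sub_one_of_pos (div_pos (hx.trans_le hxy) hx)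
  rw [log_div (hx.trans_le hxy).ne' hx.ne'] at h
  have : x * (log y - log x) ≤ x * (y / x - 1) := by gcongr
  rw [mul_sub, mul_sub, mul_div_cancel₀ _ hx.ne'] at this
  linarith

lemma sum_range_succ_natCast_id (m : ℕ) : ∑ k ∈ range (m + 1), (k : ℝ) = m * (m + 1) / 2 := by
  have h := sum_range_id_mul_two (m + 1)
  rw [Nat.add_sub_cancel] at h
  rw [eq_div_iff two_ne_zero, ← Nat.cast_sum]
  exact_mod_cast h.trans (mul_comm _ _)

lemma sum_range_sub_eq_sum_range_succ (m : ℕ) :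
    ∑ n ∈ range m, (m - n) = ∑ k ∈ range (m + 1), k := by
  induction m with
  | zero => simp
  | succ m ih =>
    rw [sum_range_succ', sum_range_succ, ← ih]
    simp

lemma abs_sum_range_succ_mul_log_sub_le (m : ℕ) :
    |∑ k ∈ range (m + 1), (k : ℝ) * log k - m ^ 2 / 2 * log m| ≤ (m : ℝ) ^ 2 := by
  have hk : ∀ k ∈ range (m + 1), (k : ℝ) ≤ m := fun k hk => by
    exact_mod_cast Nat.lt_succ_iff.1 (mem_range.1 hk)
  have hupper : ∑ k ∈ range (m + 1), (k : ℝ) * log k ≤ ∑ k ∈ range (m + 1), (k : ℝ) * log m :=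
    sum_le_sum fun k hk' => by
      rcases (Nat.cast_nonneg k : (0 : ℝ) ≤ k).eq_or_lt with h0 | hpos
      · simp [← h0]
      · exact mul_le_mul_of_nonneg_left (log_le_log hpos (hk k hk')) hpos.le
  have hlower : ∑ k ∈ range (m + 1), ((k : ℝ) * log m - (m - k))
      ≤ ∑ k ∈ range (m + 1), (k : ℝ) * log k :=
    sum_le_sum fun k hk' => mul_log_sub_le_mul_log (Nat.cast_nonneg k) (hk k hk')
  rw [← sum_mul, sum_range_succ_natCast_id] at hupper
  rw [sum_sub_distrib, ← sum_mul, sum_sub_distrib, sum_const, card_range, nsmul_eq_mul,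
    sum_range_succ_natCast_id] at hlower
  push_cast at hlower
  have hm : (m : ℝ) ≤ m ^ 2 := by exact_mod_cast Nat.le_self_pow two_ne_zero m
  have hlog0 : 0 ≤ log m := log_natCast_nonneg m
  have hlogm : log m ≤ m := log_le_self (Nat.cast_nonneg m)
  rw [abs_le]
  constructor <;> nlinarith

lemma log_prod_pow_mul_factorial_div {r : ℝ} (hr : r ≠ 0) (m : ℕ) :
    log (∏ n ∈ range m, r ^ (2 * (m - n)) * (n ! : ℝ) / (2 * m !))
      = m * (m + 1) * log r - m * log 2 - ∑ k ∈ range (m + 1), (k : ℝ) * log k := by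
  have hterm : ∀ n ∈ range m, log (r ^ (2 * (m - n)) * (n ! : ℝ) / (2 * m !))
      = 2 * log r * (m - n : ℕ) - log 2 - (log m ! - log n !) := fun n _ => by
    rw [log_div (by positivity) (by positivity), log_mul (by positivity) (by positivity),
      log_mul two_ne_zero (by positivity), log_pow]
    push_cast
    ring
  rw [log_prod fun n _ => by positivity, sum_congr rfl hterm, sum_sub_distrib, sum_sub_distrib,
    ← mul_sum, ← Nat.cast_sum, sum_range_sub_eq_sum_range_succ, Nat.cast_sum,
    sum_range_succ_natCast_id, sum_range_log_factorial_sub, sum_const,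
    card_range, nsmul_eq_mul]
  ring

lemma abs_log_prod_pow_mul_factorial_div_add_le {r : ℝ} (hr : r ≠ 0) (m : ℕ) :
    |log (∏ n ∈ range m, r ^ (2 * (m - n)) * (n ! : ℝ) / (2 * m !)) + 1 / 2 * m ^ 2 * log m|
      ≤ (2 * |log r| + 2) * (m : ℝ) ^ 2 := by
  have hS := abs_le.1 (abs_sum_range_succ_mul_log_sub_le m)
  have hlog2 : log 2 ≤ 1 := by linarith [log_two_lt_d9]
  have hlog2' : 0 ≤ log 2 := log_nonneg one_le_two
  have hm : (m : ℝ) ≤ m ^ 2 := by exact_mod_cast Nat.le_self_pow two_ne_zero m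
  rw [log_prod_pow_mul_factorial_div hr, abs_le]
  constructor <;> nlinarith [neg_abs_le (log r), le_abs_self (log r), sq_nonneg (m : ℝ)]

theorem stmt19_general {Ω : Type*} [MeasurableSpace Ω] (P : Measure Ω)
    (a : ℕ → Ω → ℂ) (ha : ∀ n, Measurable (a n))
    (hlaw : ∀ n, Measure.map (a n) P = stdComplexGaussian)
    (hindep : iIndepFun a P)
    (r : ℝ) (hr : 0 < r) :
    ∃ C : ℝ, 0 < C ∧ ∃ M : ℕ, ∀ m : ℕ, M ≤ m →
      (ENNReal.ofReal (∏ n ∈ Finset.range m,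
            r ^ (2 * (m - n)) * (n.factorial : ℝ) / (2 * m.factorial))
          ≤ P {ω | ∀ n < m, ‖a n ω‖
              ≤ r ^ (m - n) * Real.sqrt (n.factorial) / Real.sqrt (m.factorial)}) ∧
      |Real.log (∏ n ∈ Finset.range m,
            r ^ (2 * (m - n)) * (n.factorial : ℝ) / (2 * m.factorial))
          + (1 / 2) * (m : ℝ) ^ 2 * Real.log m| ≤ C * (m : ℝ) ^ 2 := by
  refine ⟨2 * |log r| + 2, by positivity, ⌈r ^ 2 * exp (r ^ 2) / log 2⌉₊, fun m hm => ?_⟩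
  refine ⟨?_, abs_log_prod_pow_mul_factorial_div_add_le hr.ne' m⟩
  set t : ℕ → ℝ := fun n => r ^ (m - n) * √(n ! : ℝ) / √(m ! : ℝ) with ht
  have ht_sq (n : ℕ) : t n ^ 2 = (r ^ 2) ^ (m - n) * n ! / m ! := by
    rw [ht, div_pow, mul_pow, sq_sqrt (by positivity), sq_sqrt (by positivity), ← pow_mul,
      ← pow_mul, mul_comm 2]
  have ht_le_log_two (n : ℕ) (hn : n ∈ range m) : t n ^ 2 ≤ log 2 := by
    have hm_pos : (0 : ℝ) < m := Nat.cast_pos.2 (Nat.zero_lt_of_lt (mem_range.1 hn))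
    have hM : r ^ 2 * exp (r ^ 2) ≤ m * log 2 := by
      rw [← div_le_iff₀ (log_pos one_lt_two)]
      exact Nat.ceil_le.1 hm
    calc t n ^ 2 ≤ r ^ 2 * exp (r ^ 2) / m := by
          rw [ht_sq]
          exact pow_mul_factorial_div_factorial_le (sq_nonneg r) (mem_range.1 hn)
      _ ≤ log 2 := by rwa [div_le_iff₀ hm_pos, mul_comm (log 2)]
  have hterm (n : ℕ) : r ^ (2 * (m - n)) * (n ! : ℝ) / (2 * m !) = t n ^ 2 / 2 := by
    rw [ht_sq, ← pow_mul]
    ring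
  have hevent : {ω | ∀ n < m, ‖a n ω‖ ≤ r ^ (m - n) * √(n ! : ℝ) / √(m ! : ℝ)}
      = {ω | ∀ n ∈ range m, ‖a n ω‖ ≤ t n} := by
    simp only [mem_range, ht]
  simp_rw [hterm, hevent]
  exact ofReal_prod_le_measure_forall_norm_le ha hlaw hindep _ (fun n _ => by positivity)
    ht_le_log_two

theorem stmt19 {Ω : Type*} [MeasurableSpace Ω] (P : Measure Ω) [IsProbabilityMeasure P]
    (a : ℕ → Ω → ℂ) (ha : ∀ n, Measurable (a n))
    (hlaw : ∀ n, Measure.map (a n) P = stdComplexGaussian)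
    (hindep : iIndepFun a P)
    (r : ℝ) (hr : 0 < r) :
    ∃ C : ℝ, 0 < C ∧ ∃ M : ℕ, ∀ m : ℕ, M ≤ m →
      (ENNReal.ofReal (∏ n ∈ Finset.range m,
            r ^ (2 * (m - n)) * (n.factorial : ℝ) / (2 * m.factorial))
          ≤ P {ω | ∀ n < m, ‖a n ω‖
              ≤ r ^ (m - n) * Real.sqrt (n.factorial) / Real.sqrt (m.factorial)}) ∧
      |Real.log (∏ n ∈ Finset.range m,
            r ^ (2 * (m - n)) * (n.factorial : ℝ) / (2 * m.factorial))
          + (1 / 2) * (m : ℝ) ^ 2 * Real.log m| ≤ C * (m : ℝ) ^ 2 :=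
  stmt19_general P a ha hlaw hindep r hr
end
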